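/- arXiv:0912.2487 — 4 statements merged into one kernel-verified Lean document; each statement's English description precedes it below -/
import Mathlib

section
/- If S₁(ω) and S₂(ω) are random isolated invariant sets admitting disjoint random isolating blocks, then S(ω) = S₁(ω) ∪ S₂(ω) is a random isolated invariant set. -/
/-- The invariant part of a random set under a cocycle. -/
def InvSet {Ω X : Type*} (θ : ℤ → Ω → Ω) (φ : ℤ → Ω → X → X)
    (N : Ω → Set X) (ω : Ω) : Set X :=
  {x ∈ N ω | ∀ n : ℤ, φ n ω x ∈ N (θ n ω)}

/-- A random isolating neighborhood: a random compact set whose invariant part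
lies in its interior. -/
def IsIsolatingNbhd {Ω X : Type*} [TopologicalSpace X]
    (θ : ℤ → Ω → Ω) (φ : ℤ → Ω → X → X) (N : Ω → Set X) : Prop :=
  (∀ ω : Ω, IsCompact (N ω)) ∧ ∀ ω : Ω, InvSet θ φ N ω ⊆ interior (N ω)

/-- A random isolated invariant set. -/
def IsRandIsolInvSet {Ω X : Type*} [TopologicalSpace X]
    (θ : ℤ → Ω → Ω) (φ : ℤ → Ω → X → X) (S : Ω → Set X) : Prop :=
  ∃ N : Ω → Set X, IsIsolatingNbhd θ φ N ∧ ∀ ω : Ω, S ω = InvSet θ φ N ω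

/-- A random isolating block (for the time-one map `φ(1, ·)`). -/
def IsIsolatingBlock {Ω X : Type*} [TopologicalSpace X]
    (θ : ℤ → Ω → Ω) (φ : ℤ → Ω → X → X) (N : Ω → Set X) : Prop :=
  (∀ ω : Ω, IsCompact (N ω)) ∧
  ∀ ω : Ω,
    (φ 1 (θ (-1) ω) '' N (θ (-1) ω)) ∩ N ω ∩ ((φ 1 ω) ⁻¹' N (θ 1 ω))
      ⊆ interior (N ω)

/-- Shifting an invariant point along the cocycle stays in the invariant part. -/
lemma invSet_shift {Ω X : Type*} (θ : ℤ → Ω → Ω) (φ : ℤ → Ω → X → X)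
    (hθ : ∀ n m : ℤ, θ (n + m) = θ n ∘ θ m)
    (hφ : ∀ (n m : ℤ) (ω : Ω), φ (n + m) ω = φ n (θ m ω) ∘ φ m ω)
    (P : Ω → Set X) {ω : Ω} {x : X} (hx : x ∈ InvSet θ φ P ω) (n : ℤ) :
    φ n ω x ∈ InvSet θ φ P (θ n ω) := by
  refine ⟨hx.2 n, fun m => ?_⟩
  have h1 : φ m (θ n ω) (φ n ω x) = φ (m + n) ω x := by rw [hφ m n ω]; rfl
  have h2 : θ m (θ n ω) = θ (m + n) ω := (congrFun (hθ m n) ω).symm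
  rw [h1, h2]
  exact hx.2 (m + n)

/-- Open set of points staying in the interior of `N₂` for three forward steps. -/
def goodU {Ω X : Type*} [TopologicalSpace X] (θ : ℤ → Ω → Ω) (φ : ℤ → Ω → X → X)
    (N₂ : Ω → Set X) (ω : Ω) : Set X :=
  interior (N₂ ω) ∩ ((φ 1 ω) ⁻¹' interior (N₂ (θ 1 ω)))
    ∩ ((φ 2 ω) ⁻¹' interior (N₂ (θ 2 ω)))
    ∩ ((φ 3 ω) ⁻¹' interior (N₂ (θ 3 ω)))

/-- The candidate isolating neighborhood for the union. -/
def goodN {Ω X : Type*} [TopologicalSpace X] (θ : ℤ → Ω → Ω) (φ : ℤ → Ω → X → X)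
    (N₁ N₂ : Ω → Set X) (ω : Ω) : Set X :=
  N₁ ω ∪ (φ 1 (θ (-1) ω) ''
    (N₂ (θ (-1) ω) ∩ closure (goodU θ φ N₂ (θ (-1) ω))))

/-- the union of two random isolated invariant sets admitting
disjoint random isolating blocks is a random isolated invariant set. -/
theorem union_isolated_invariant {Ω X : Type*} [TopologicalSpace X]
    (θ : ℤ → Ω → Ω) (φ : ℤ → Ω → X → X)
    (hθ0 : θ 0 = id) (hθ : ∀ n m : ℤ, θ (n + m) = θ n ∘ θ m)
    (hφ0 : ∀ ω : Ω, φ 0 ω = id)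
    (hφ : ∀ (n m : ℤ) (ω : Ω), φ (n + m) ω = φ n (θ m ω) ∘ φ m ω)
    (hhomeo : ∀ (n : ℤ) (ω : Ω), IsHomeomorph (φ n ω))
    (S₁ S₂ N₁ N₂ : Ω → Set X)
    (hb₁ : IsIsolatingBlock θ φ N₁) (hb₂ : IsIsolatingBlock θ φ N₂)
    (hdisj : ∀ ω : Ω, N₁ ω ∩ N₂ ω = ∅)
    (hS₁ : ∀ ω : Ω, S₁ ω = InvSet θ φ N₁ ω)
    (hS₂ : ∀ ω : Ω, S₂ ω = InvSet θ φ N₂ ω)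
    (hiso₁ : ∀ ω : Ω, S₁ ω ⊆ interior (N₁ ω))
    (hiso₂ : ∀ ω : Ω, S₂ ω ⊆ interior (N₂ ω)) :
    IsRandIsolInvSet θ φ (fun ω => S₁ ω ∪ S₂ ω) := by
  classical
  have hθ' : ∀ (a b : ℤ) (ω' : Ω), θ a (θ b ω') = θ (a + b) ω' :=
    fun a b ω' => (congrFun (hθ a b) ω').symm
  have hφ' : ∀ (a b : ℤ) (ω' : Ω) (y : X), φ a (θ b ω') (φ b ω' y) = φ (a + b) ω' y :=
    fun a b ω' y => by rw [hφ a b ω']; rfl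
  have hdisj' : ∀ (ω' : Ω) (y : X), y ∈ N₁ ω' → y ∈ N₂ ω' → False := by
    intro ω' y h1 h2
    have : y ∈ N₁ ω' ∩ N₂ ω' := ⟨h1, h2⟩
    rw [hdisj ω'] at this
    exact this
  have hiso₁' : ∀ ω' : Ω, InvSet θ φ N₁ ω' ⊆ interior (N₁ ω') := by
    intro ω'; rw [← hS₁ ω']; exact hiso₁ ω'
  have hiso₂' : ∀ ω' : Ω, InvSet θ φ N₂ ω' ⊆ interior (N₂ ω') := by
    intro ω'; rw [← hS₂ ω']; exact hiso₂ ω'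
  -- invariant points of N₂ are in goodU
  have hgoodU : ∀ (ω' : Ω) (y : X), y ∈ InvSet θ φ N₂ ω' → y ∈ goodU θ φ N₂ ω' := by
    intro ω' y hy
    have m1 := invSet_shift θ φ hθ hφ N₂ hy 1
    have m2 := invSet_shift θ φ hθ hφ N₂ hy 2
    have m3 := invSet_shift θ φ hθ hφ N₂ hy 3
    exact ⟨⟨⟨hiso₂' _ hy, hiso₂' _ m1⟩, hiso₂' _ m2⟩, hiso₂' _ m3⟩
  have hUopen : ∀ ω' : Ω, IsOpen (goodU θ φ N₂ ω') := by
    intro ω'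
    refine (((isOpen_interior.inter ?_).inter ?_).inter ?_) <;>
      exact IsOpen.preimage (hhomeo _ _).continuous isOpen_interior
  have hUsub : ∀ ω' : Ω, goodU θ φ N₂ ω' ⊆ N₂ ω' ∩ closure (goodU θ φ N₂ ω') :=
    fun ω' y hy => ⟨interior_subset hy.1.1.1, subset_closure hy⟩
  -- main equality
  have main : ∀ ω : Ω, InvSet θ φ (goodN θ φ N₁ N₂) ω = S₁ ω ∪ S₂ ω := by
    intro ω
    apply subset_antisymm
    · -- hard direction
      intro x hx
      obtain ⟨hx0, hxn⟩ := hx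
      -- membership in the image part at time n forces C₂-membership at time n-1
      have key : ∀ n : ℤ, φ n ω x ∈ N₁ (θ n ω) ∨
          φ (n-1) ω x ∈ N₂ (θ (n-1) ω) ∩ closure (goodU θ φ N₂ (θ (n-1) ω)) := by
        intro n
        have h := hxn n
        simp only [goodN, Set.mem_union] at h
        rcases h with h | h
        · exact Or.inl h
        · obtain ⟨c, hc, hceq⟩ := h
          right
          have e : θ (-1) (θ n ω) = θ (n-1) ω := by
            rw [hθ' (-1) n ω, show (-1 : ℤ) + n = n - 1 from by ring]
          rw [e] at hc hceq
          have heq2 : φ 1 (θ (n-1) ω) (φ (n-1) ω x) = φ n ω x := by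
            rw [hφ' 1 (n-1) ω x, show (1 : ℤ) + (n-1) = n from by ring]
          have hcx : c = φ (n-1) ω x :=
            (hhomeo 1 (θ (n-1) ω)).bijective.injective (hceq.trans heq2.symm)
          rwa [hcx] at hc
      have step : ∀ n : ℤ, φ n ω x ∈ N₁ (θ n ω) → φ (n+1) ω x ∈ N₁ (θ (n+1) ω) := by
        intro n hn
        rcases key (n+1) with h | h
        · exact h
        · exfalso
          rw [show n + 1 - 1 = n from by ring] at h
          exact hdisj' _ _ hn h.1
      have mono : ∀ m n : ℤ, m ≤ n → φ m ω x ∈ N₁ (θ m ω) → φ n ω x ∈ N₁ (θ n ω) := by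
        intro m n hmn hm
        have hup : ∀ d : ℕ, φ (m + d) ω x ∈ N₁ (θ (m + d) ω) := by
          intro d
          induction d with
          | zero => simpa using hm
          | succ d ih =>
            have h := step _ ih
            rwa [show m + (d : ℤ) + 1 = m + ((d+1 : ℕ) : ℤ) from by push_cast; ring] at h
        have h := hup (n - m).toNat
        rwa [show m + (((n - m).toNat : ℤ)) = n from by omega] at h
      by_cases hall : ∀ n : ℤ, φ n ω x ∈ N₁ (θ n ω)
      · left
        rw [hS₁ ω]
        have h0 := hall 0
        rw [hθ0, hφ0 ω] at h0
        exact ⟨h0, hall⟩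
      · by_cases hnone : ∀ n : ℤ, ¬ φ n ω x ∈ N₁ (θ n ω)
        · right
          rw [hS₂ ω]
          have hb : ∀ n : ℤ, φ n ω x ∈ N₂ (θ n ω) := by
            intro n
            have h := (key (n+1)).resolve_left (hnone (n+1))
            rw [show n + 1 - 1 = n from by ring] at h
            exact h.1
          have h0 := hb 0
          rw [hθ0, hφ0 ω] at h0
          exact ⟨h0, hb⟩
        · exfalso
          push_neg at hall hnone
          obtain ⟨n₀, hn₀⟩ := hall
          obtain ⟨n₁, hn₁⟩ := hnone
          have cross : ∃ k : ℤ, φ k ω x ∈ N₁ (θ k ω) ∧ ¬ φ (k-1) ω x ∈ N₁ (θ (k-1) ω) := by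
            by_contra hc
            push_neg at hc
            have hdesc : ∀ d : ℕ, φ (n₁ - d) ω x ∈ N₁ (θ (n₁ - d) ω) := by
              intro d
              induction d with
              | zero => simpa using hn₁
              | succ d ih =>
                have h := hc _ ih
                rw [show n₁ - (d : ℤ) - 1 = n₁ - ((d+1 : ℕ) : ℤ) from by push_cast; ring] at h
                exact h
            rcases le_or_gt n₀ n₁ with hle | hlt
            · have h := hdesc (n₁ - n₀).toNat
              rw [show n₁ - (((n₁ - n₀).toNat : ℤ)) = n₀ from by omega] at h
              exact hn₀ h
            · exact hn₀ (mono n₁ n₀ hlt.le hn₁)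
          obtain ⟨k, hk, hk'⟩ := cross
          -- everything before k-1 is in the C₂-part
          have hbm : φ (k-2) ω x ∈ N₂ (θ (k-2) ω) ∩ closure (goodU θ φ N₂ (θ (k-2) ω)) := by
            have h := (key (k-1)).resolve_left hk'
            rwa [show k - 1 - 1 = k - 2 from by ring] at h
          -- block property of N₁ puts φ (k+1) ω x in the interior of N₁
          have hy_int : φ (k+1) ω x ∈ interior (N₁ (θ (k+1) ω)) := by
            apply hb₁.2 (θ (k+1) ω)
            refine ⟨⟨?_, ?_⟩, ?_⟩
            · rw [hθ' (-1) (k+1) ω, show (-1 : ℤ) + (k+1) = k from by ring]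
              refine ⟨φ k ω x, hk, ?_⟩
              rw [hφ' 1 k ω x, show (1 : ℤ) + k = k + 1 from by ring]
            · exact mono k (k+1) (by omega) hk
            · show φ 1 (θ (k+1) ω) (φ (k+1) ω x) ∈ N₁ (θ 1 (θ (k+1) ω))
              rw [hφ' 1 (k+1) ω x, hθ' 1 (k+1) ω,
                show (1 : ℤ) + (k+1) = k + 2 from by ring]
              exact mono k (k+2) (by omega) hk
          -- the three-step closure factor puts the same point in closure (interior N₂)
          have hy_cl : φ (k+1) ω x ∈ closure (interior (N₂ (θ (k+1) ω))) := by
            have h1 : φ (k-2) ω x ∈ closure (goodU θ φ N₂ (θ (k-2) ω)) := hbm.2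
            have hcont : Continuous (φ 3 (θ (k-2) ω)) := (hhomeo 3 _).continuous
            have h2 : φ 3 (θ (k-2) ω) (φ (k-2) ω x) ∈
                closure (φ 3 (θ (k-2) ω) '' goodU θ φ N₂ (θ (k-2) ω)) :=
              image_closure_subset_closure_image hcont ⟨_, h1, rfl⟩
            have h3 : φ 3 (θ (k-2) ω) '' goodU θ φ N₂ (θ (k-2) ω) ⊆
                interior (N₂ (θ 3 (θ (k-2) ω))) := by
              rintro y ⟨u, hu, rfl⟩
              exact hu.2
            have h4 := closure_mono h3 h2
            rw [hθ' 3 (k-2) ω, show (3 : ℤ) + (k-2) = k + 1 from by ring,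
              hφ' 3 (k-2) ω x] at h4
            rwa [show (3 : ℤ) + (k-2) = k + 1 from by ring] at h4
          -- contradiction: disjoint open interior N₁ meets interior N₂
          obtain ⟨z, hz1, hz2⟩ :=
            mem_closure_iff.mp hy_cl (interior (N₁ (θ (k+1) ω))) isOpen_interior hy_int
          exact hdisj' _ _ (interior_subset hz1) (interior_subset hz2)
    · -- easy direction
      rintro x (hx | hx)
      · rw [hS₁ ω] at hx
        exact ⟨Or.inl hx.1, fun n => Or.inl (hx.2 n)⟩
      · rw [hS₂ ω] at hx
        have mem : ∀ n : ℤ, φ n ω x ∈ goodN θ φ N₁ N₂ (θ n ω) := by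
          intro n
          have hcInv : φ (n-1) ω x ∈ InvSet θ φ N₂ (θ (n-1) ω) :=
            invSet_shift θ φ hθ hφ N₂ hx (n-1)
          have e : θ (-1) (θ n ω) = θ (n-1) ω := by
            rw [hθ' (-1) n ω, show (-1 : ℤ) + n = n - 1 from by ring]
          have heq2 : φ 1 (θ (n-1) ω) (φ (n-1) ω x) = φ n ω x := by
            rw [hφ' 1 (n-1) ω x, show (1 : ℤ) + (n-1) = n from by ring]
          right
          rw [e]
          exact ⟨φ (n-1) ω x, hUsub _ (hgoodU _ _ hcInv), heq2⟩
        refine ⟨?_, mem⟩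
        have h0 := mem 0
        rw [hθ0, hφ0 ω] at h0
        exact h0
  -- interior condition
  have hint : ∀ ω : Ω, S₁ ω ∪ S₂ ω ⊆ interior (goodN θ φ N₁ N₂ ω) := by
    rintro ω x (hx | hx)
    · exact interior_mono Set.subset_union_left (hiso₁ ω hx)
    · rw [hS₂ ω] at hx
      have hcInv : φ (-1) ω x ∈ InvSet θ φ N₂ (θ (-1) ω) :=
        invSet_shift θ φ hθ hφ N₂ hx (-1)
      have hopen : IsOpen (φ 1 (θ (-1) ω) '' goodU θ φ N₂ (θ (-1) ω)) :=
        (hhomeo 1 _).isOpenMap _ (hUopen _)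
      have hsub : φ 1 (θ (-1) ω) '' goodU θ φ N₂ (θ (-1) ω) ⊆ goodN θ φ N₁ N₂ ω := by
        rintro y ⟨u, hu, rfl⟩
        exact Or.inr ⟨u, hUsub _ hu, rfl⟩
      have heqx : φ 1 (θ (-1) ω) (φ (-1) ω x) = x := by
        rw [hφ' 1 (-1) ω x, show (1 : ℤ) + (-1) = 0 from by ring, hφ0 ω]
        rfl
      have hxin : x ∈ φ 1 (θ (-1) ω) '' goodU θ φ N₂ (θ (-1) ω) :=
        ⟨φ (-1) ω x, hgoodU _ _ hcInv, heqx⟩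
      exact interior_maximal hsub hopen hxin
  -- compactness
  have hcomp : ∀ ω : Ω, IsCompact (goodN θ φ N₁ N₂ ω) := by
    intro ω
    exact (hb₁.1 ω).union
      (((hb₂.1 _).inter_right isClosed_closure).image (hhomeo 1 _).continuous)
  exact ⟨goodN θ φ N₁ N₂, ⟨hcomp, fun ω => by rw [main ω]; exact hint ω⟩,
    fun ω => (main ω).symm⟩
end

section
/- Any two distinct prime random isolated invariant sets are pointwise disjoint: if S₁ and S₂ are prime random isolated invariant sets for the random homeomorphism φ and S₁ ≠ S₂, then S₁(ω) ∩ S₂(ω) = ∅ for all ω ∈ Ω. -/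
/-- A prime random isolated invariant set: no nonempty proper random subset of it
is a random isolated invariant set. -/
def IsPrimeRIIS {Ω X : Type*} [TopologicalSpace X]
    (θ : ℤ → Ω → Ω) (φ : ℤ → Ω → X → X) (S : Ω → Set X) : Prop :=
  IsRandIsolInvSet θ φ S ∧
  ∀ S' : Ω → Set X, (∀ ω, S' ω ⊆ S ω) → (∃ ω₀, S' ω₀ ≠ S ω₀) →
    (∃ ω, (S' ω).Nonempty) → ¬ IsRandIsolInvSet θ φ S'

/-- two distinct prime random isolated invariant sets are
pointwise disjoint. -/
theorem prime_sets_disjoint {Ω : Type*} {X : Type*} [MetricSpace X]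
    (θ : ℤ → Ω → Ω) (φ : ℤ → Ω → X → X)
    (hθ0 : θ 0 = id) (hθ : ∀ n m : ℤ, θ (n + m) = θ n ∘ θ m)
    (hφ0 : ∀ ω : Ω, φ 0 ω = id)
    (hφ : ∀ (n m : ℤ) (ω : Ω), φ (n + m) ω = φ n (θ m ω) ∘ φ m ω)
    (hhomeo : ∀ (n : ℤ) (ω : Ω), IsHomeomorph (φ n ω))
    -- every nonempty compact forward-invariant random set contains a nonempty
    -- fully invariant random set
    (hrecur : ∀ K : Ω → Set X, (∀ ω, IsCompact (K ω)) → (∀ ω, (K ω).Nonempty) →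
      (∀ ω, ∀ x ∈ K ω, φ 1 ω x ∈ K (θ 1 ω)) →
      ∃ J : Ω → Set X, (∀ ω, J ω ⊆ K ω) ∧ (∀ ω, (J ω).Nonempty) ∧
        (∀ ω (n : ℤ), ∀ x ∈ J ω, φ n ω x ∈ J (θ n ω)))
    (S₁ S₂ : Ω → Set X)
    (h₁ : IsPrimeRIIS θ φ S₁) (h₂ : IsPrimeRIIS θ φ S₂)
    (hne : S₁ ≠ S₂) :
    ∀ ω : Ω, S₁ ω ∩ S₂ ω = ∅ := by
  by_contra hcon
  push_neg at hcon
  obtain ⟨ω₁, hω₁⟩ := hcon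
  set S' : Ω → Set X := fun ω => S₁ ω ∩ S₂ ω with hS'
  have hne' : ∃ ω, (S' ω).Nonempty := ⟨ω₁, hω₁⟩
  -- S' is a random isolated invariant set with neighborhood N₁ ∩ N₂
  obtain ⟨N₁, ⟨hc₁, hi₁⟩, hinv₁⟩ := h₁.1
  obtain ⟨N₂, ⟨hc₂, hi₂⟩, hinv₂⟩ := h₂.1
  have hsplit : ∀ ω, InvSet θ φ (fun ω => N₁ ω ∩ N₂ ω) ω =
      InvSet θ φ N₁ ω ∩ InvSet θ φ N₂ ω := by
    intro ω
    ext x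
    simp only [InvSet, Set.mem_setOf_eq, Set.mem_inter_iff]
    exact ⟨fun ⟨⟨a, b⟩, c⟩ => ⟨⟨a, fun n => (c n).1⟩, ⟨b, fun n => (c n).2⟩⟩,
      fun ⟨⟨a, c⟩, ⟨b, d⟩⟩ => ⟨⟨a, b⟩, fun n => ⟨c n, d n⟩⟩⟩
  have hInv : ∀ ω, InvSet θ φ (fun ω => N₁ ω ∩ N₂ ω) ω = S' ω := by
    intro ω
    rw [hsplit, ← hinv₁, ← hinv₂]
  have hriis : IsRandIsolInvSet θ φ S' := by
    refine ⟨fun ω => N₁ ω ∩ N₂ ω, ⟨fun ω => (hc₁ ω).inter (hc₂ ω), ?_⟩,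
      fun ω => (hInv ω).symm⟩
    intro ω x hx
    rw [hsplit] at hx
    rw [interior_inter]
    exact ⟨hi₁ ω hx.1, hi₂ ω hx.2⟩
  -- S' is a proper subset of S₁ or of S₂
  by_cases hp : ∀ ω, S' ω = S₁ ω
  · have hsub : ∀ ω, S₁ ω ⊆ S₂ ω := fun ω x hx => ((hp ω) ▸ hx : x ∈ S' ω).2
    have hp2 : ∃ ω₀, S' ω₀ ≠ S₂ ω₀ := by
      by_contra h
      push_neg at h
      apply hne
      funext ω
      rw [← hp ω, h ω]
    exact h₂.2 S' (fun ω => Set.inter_subset_right) hp2 hne' hriis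
  · push_neg at hp
    exact h₁.2 S' (fun ω => Set.inter_subset_left) hp hne' hriis
end

section
/- Under a topological equivalence α between φ₁ and φ₂, the image of a prime random isolated invariant set for φ₁ is a prime random isolated invariant set for φ₂. -/
/-- the image of a prime random isolated invariant set under a
topological equivalence is a prime random isolated invariant set. -/
theorem image_prime_RIIS {Ω X₁ X₂ : Type*}
    [TopologicalSpace X₁] [TopologicalSpace X₂]
    (θ : ℤ → Ω → Ω) (φ₁ : ℤ → Ω → X₁ → X₁) (φ₂ : ℤ → Ω → X₂ → X₂)
    (α : Ω → X₁ → X₂)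
    (hα : ∀ ω : Ω, IsHomeomorph (α ω))
    (hconj : ∀ (n : ℤ) (ω : Ω) (x : X₁), φ₂ n ω (α ω x) = α (θ n ω) (φ₁ n ω x))
    (S : Ω → Set X₁)
    (hS : IsPrimeRIIS θ φ₁ S) :
    IsPrimeRIIS θ φ₂ (fun ω => α ω '' S ω) := by
  -- InvSet commutes with image under α
  have key : ∀ (N : Ω → Set X₁) (ω : Ω),
      InvSet θ φ₂ (fun ω => α ω '' N ω) ω = α ω '' InvSet θ φ₁ N ω := by
    intro N ω
    ext y
    constructor
    · rintro ⟨⟨x, hx, rfl⟩, h2⟩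
      refine ⟨x, ⟨hx, fun n => ?_⟩, rfl⟩
      have := h2 n
      rw [hconj] at this
      obtain ⟨z, hz, hz'⟩ := this
      rwa [← (hα (θ n ω)).injective hz']
    · rintro ⟨x, ⟨hx, h2⟩, rfl⟩
      refine ⟨⟨x, hx, rfl⟩, fun n => ?_⟩
      rw [hconj]
      exact ⟨_, h2 n, rfl⟩
  -- InvSet commutes with preimage under α
  have key' : ∀ (N : Ω → Set X₂) (ω : Ω),
      InvSet θ φ₁ (fun ω => α ω ⁻¹' N ω) ω = α ω ⁻¹' InvSet θ φ₂ N ω := by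
    intro N ω
    ext x
    constructor
    · rintro ⟨hx, h2⟩
      refine ⟨hx, fun n => ?_⟩
      rw [hconj]
      exact h2 n
    · rintro ⟨hx, h2⟩
      refine ⟨hx, fun n => ?_⟩
      have := h2 n
      rwa [hconj] at this
  obtain ⟨⟨N, ⟨hNc, hNi⟩, hN⟩, hprime⟩ := hS
  constructor
  · refine ⟨fun ω => α ω '' N ω, ⟨fun ω => (hNc ω).image (hα ω).continuous, fun ω => ?_⟩,
      fun ω => ?_⟩
    · rw [key]
      calc α ω '' InvSet θ φ₁ N ω ⊆ α ω '' interior (N ω) :=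
            Set.image_mono (hNi ω)
        _ ⊆ interior (α ω '' N ω) := (hα ω).isOpenMap.image_interior_subset _
    · show α ω '' S ω = _
      rw [key, hN]
  · rintro S' hsub ⟨ω₀, hne⟩ ⟨ω₁, hnonempty⟩ ⟨N₂, ⟨hN₂c, hN₂i⟩, hN₂⟩
    set T : Ω → Set X₁ := fun ω => α ω ⁻¹' S' ω with hT
    have hTsub : ∀ ω, T ω ⊆ S ω := by
      intro ω x hx
      obtain ⟨z, hz, hz'⟩ := hsub ω hx
      rwa [← (hα ω).injective hz']
    have hTS : ∀ ω, α ω '' T ω = S' ω := fun ω =>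
      Set.image_preimage_eq _ (hα ω).surjective
    refine hprime T hTsub ⟨ω₀, fun h => hne ?_⟩ ⟨ω₁, ?_⟩ ?_
    · rw [← hTS ω₀, h]
    · obtain ⟨y, hy⟩ := hnonempty
      obtain ⟨x, rfl⟩ := (hα ω₁).surjective y
      exact ⟨x, hy⟩
    · refine ⟨fun ω => α ω ⁻¹' N₂ ω, ⟨fun ω => ?_, fun ω => ?_⟩, fun ω => ?_⟩
      · show IsCompact (α ω ⁻¹' N₂ ω)
        have : α ω ⁻¹' N₂ ω = ((hα ω).homeomorph (α ω)).symm '' N₂ ω := by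
          rw [Homeomorph.image_symm]
          rfl
        rw [this]
        exact (hN₂c ω).image (Homeomorph.continuous _)
      · rw [key']
        refine (Set.preimage_mono (hN₂i ω)).trans ?_
        exact interior_maximal (Set.preimage_mono interior_subset)
          (isOpen_interior.preimage (hα ω).continuous)
      · rw [key', ← hN₂]
end

section
/- If φ₁ and φ₂ are topologically equivalent via α and both have finitely many prime random isolated invariant sets, then α maps the extreme maximal random isolated invariant set of φ₁ onto that of φ₂: α(ω, T_{φ₁}(ω)) = T_{φ₂}(ω) for all ω. -/
section Aux

variable {Ω X₁ X₂ : Type*} [TopologicalSpace X₁] [TopologicalSpace X₂]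
    (θ : ℤ → Ω → Ω) (φ₁ : ℤ → Ω → X₁ → X₁) (φ₂ : ℤ → Ω → X₂ → X₂)
    (α : Ω → X₁ → X₂)

theorem invSet_image
    (hα : ∀ ω : Ω, Function.Injective (α ω))
    (hconj : ∀ (n : ℤ) (ω : Ω) (x : X₁), φ₂ n ω (α ω x) = α (θ n ω) (φ₁ n ω x))
    (N : Ω → Set X₁) (ω : Ω) :
    InvSet θ φ₂ (fun ω => α ω '' N ω) ω = α ω '' InvSet θ φ₁ N ω := by
  ext x
  constructor
  · rintro ⟨⟨y, hy, rfl⟩, hinv⟩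
    refine ⟨y, ⟨hy, fun n => ?_⟩, rfl⟩
    have := hinv n
    rw [hconj] at this
    exact (hα (θ n ω)).mem_set_image.mp this
  · rintro ⟨y, ⟨hy, hinv⟩, rfl⟩
    refine ⟨⟨y, hy, rfl⟩, fun n => ?_⟩
    rw [hconj]
    exact ⟨_, hinv n, rfl⟩

theorem riis_image
    (hα : ∀ ω : Ω, IsHomeomorph (α ω))
    (hconj : ∀ (n : ℤ) (ω : Ω) (x : X₁), φ₂ n ω (α ω x) = α (θ n ω) (φ₁ n ω x))
    (S : Ω → Set X₁) (hS : IsRandIsolInvSet θ φ₁ S) :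
    IsRandIsolInvSet θ φ₂ (fun ω => α ω '' S ω) := by
  obtain ⟨N, ⟨hcomp, hiso⟩, hSN⟩ := hS
  refine ⟨fun ω => α ω '' N ω, ⟨fun ω => (hcomp ω).image (hα ω).continuous,
    fun ω => ?_⟩, fun ω => ?_⟩
  · show InvSet θ φ₂ (fun ω => α ω '' N ω) ω ⊆ interior (α ω '' N ω)
    rw [invSet_image θ φ₁ φ₂ α (fun ω => (hα ω).injective) hconj]
    exact (Set.image_mono (hiso ω)).trans ((hα ω).isOpenMap.image_interior_subset _)
  · show α ω '' S ω = _
    rw [invSet_image θ φ₁ φ₂ α (fun ω => (hα ω).injective) hconj, hSN ω]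

theorem prime_image
    (hα : ∀ ω : Ω, IsHomeomorph (α ω))
    (hconj : ∀ (n : ℤ) (ω : Ω) (x : X₁), φ₂ n ω (α ω x) = α (θ n ω) (φ₁ n ω x))
    (S : Ω → Set X₁) (hS : IsPrimeRIIS θ φ₁ S) :
    IsPrimeRIIS θ φ₂ (fun ω => α ω '' S ω) := by
  obtain ⟨hriis, hprime⟩ := hS
  refine ⟨riis_image θ φ₁ φ₂ α hα hconj S hriis, fun T' hsub hne hnonempty hT' => ?_⟩
  -- pull back
  set αinv : Ω → X₂ → X₁ := fun ω => ((hα ω).homeomorph (α ω)).symm with hαinv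
  have hαinvα : ∀ ω x, αinv ω (α ω x) = x := fun ω x =>
    ((hα ω).homeomorph (α ω)).symm_apply_apply x
  have hααinv : ∀ ω y, α ω (αinv ω y) = y := fun ω y =>
    ((hα ω).homeomorph (α ω)).apply_symm_apply y
  have hαinvHomeo : ∀ ω, IsHomeomorph (αinv ω) :=
    fun ω => ((hα ω).homeomorph (α ω)).symm.isHomeomorph
  have hconj' : ∀ (n : ℤ) (ω : Ω) (y : X₂),
      φ₁ n ω (αinv ω y) = αinv (θ n ω) (φ₂ n ω y) := by
    intro n ω y
    have := hconj n ω (αinv ω y)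
    rw [hααinv] at this
    rw [this, hαinvα]
  set S' : Ω → Set X₁ := fun ω => αinv ω '' T' ω with hS'
  have himT' : ∀ ω, α ω '' S' ω = T' ω := by
    intro ω
    rw [hS']
    ext y
    constructor
    · rintro ⟨x, ⟨z, hz, rfl⟩, rfl⟩
      rwa [hααinv]
    · intro hy
      exact ⟨αinv ω y, ⟨y, hy, rfl⟩, hααinv ω y⟩
  refine hprime S' (fun ω x hx => ?_) ?_ ?_ ?_
  · obtain ⟨y, hy, rfl⟩ := hx
    obtain ⟨z, hz, rfl⟩ := hsub ω hy
    rwa [hαinvα]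
  · obtain ⟨ω₀, hω₀⟩ := hne
    refine ⟨ω₀, fun h => hω₀ ?_⟩
    rw [← himT' ω₀, h]
  · obtain ⟨ω, y, hy⟩ := hnonempty
    exact ⟨ω, αinv ω y, y, hy, rfl⟩
  · exact riis_image θ φ₂ φ₁ αinv hαinvHomeo hconj' T' hT'

end Aux

/-- a topological equivalence maps the extreme maximal random
isolated invariant set of `φ₁` onto that of `φ₂`, when both families of prime
random isolated invariant sets are finite. -/
theorem image_extreme_maximal {Ω X₁ X₂ : Type*}
    [TopologicalSpace X₁] [TopologicalSpace X₂]
    (θ : ℤ → Ω → Ω) (φ₁ : ℤ → Ω → X₁ → X₁) (φ₂ : ℤ → Ω → X₂ → X₂)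
    (α : Ω → X₁ → X₂)
    (hα : ∀ ω : Ω, IsHomeomorph (α ω))
    (hconj : ∀ (n : ℤ) (ω : Ω) (x : X₁), φ₂ n ω (α ω x) = α (θ n ω) (φ₁ n ω x))
    (hfin₁ : {S : Ω → Set X₁ | IsPrimeRIIS θ φ₁ S}.Finite)
    (hfin₂ : {S : Ω → Set X₂ | IsPrimeRIIS θ φ₂ S}.Finite) :
    ∀ ω : Ω,
      α ω '' (⋃ S ∈ {S : Ω → Set X₁ | IsPrimeRIIS θ φ₁ S}, S ω)
        = ⋃ S ∈ {S : Ω → Set X₂ | IsPrimeRIIS θ φ₂ S}, S ω := by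
  intro ω
  set αinv : Ω → X₂ → X₁ := fun ω => ((hα ω).homeomorph (α ω)).symm with hαinv
  have hαinvα : ∀ ω x, αinv ω (α ω x) = x := fun ω x =>
    ((hα ω).homeomorph (α ω)).symm_apply_apply x
  have hααinv : ∀ ω y, α ω (αinv ω y) = y := fun ω y =>
    ((hα ω).homeomorph (α ω)).apply_symm_apply y
  have hαinvHomeo : ∀ ω, IsHomeomorph (αinv ω) :=
    fun ω => ((hα ω).homeomorph (α ω)).symm.isHomeomorph
  have hconj' : ∀ (n : ℤ) (ω : Ω) (y : X₂),
      φ₁ n ω (αinv ω y) = αinv (θ n ω) (φ₂ n ω y) := by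
    intro n ω y
    have := hconj n ω (αinv ω y)
    rw [hααinv] at this
    rw [this, hαinvα]
  ext x
  simp only [Set.mem_image, Set.mem_iUnion, Set.mem_setOf_eq]
  constructor
  · rintro ⟨y, ⟨S, hS, hy⟩, rfl⟩
    exact ⟨fun ω => α ω '' S ω, prime_image θ φ₁ φ₂ α hα hconj S hS, y, hy, rfl⟩
  · rintro ⟨T, hT, hx⟩
    exact ⟨αinv ω x,
      ⟨fun ω => αinv ω '' T ω, prime_image θ φ₂ φ₁ αinv hαinvHomeo hconj' T hT,
        x, hx, rfl⟩, hααinv ω x⟩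
end
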